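/- arXiv:2602.20364 — 2 statements merged into one kernel-verified Lean document; each statement's English description precedes it below -/
import Mathlib

section
/- Let $G$ be a totally disconnected locally compact group and $(\pi, V)$ a smooth admissible representation of $G$ over $\mathbb{C}$. Let $\|\cdot\|$ be a norm on $V$ with respect to which $\pi$ is continuous, and let $(\widetilde\pi, \widetilde V)$ denote the extension of $\pi$ to the completion $\widetilde V$ of $V$ with respect to this norm. Then for every compact open subgroup $K$ of $G$, the space of $K$-fixed vectors satisfies $\widetilde{V}^K = V^K$. -/
open UniformSpace

noncomputable section

namespace SmoothRep

variable {G : Type} [Group G] [TopologicalSpace G] [IsTopologicalGroup G]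
  [LocallyCompactSpace G] [TotallyDisconnectedSpace G]
  {V : Type} [NormedAddCommGroup V] [NormedSpace ℂ V]

/-- The submodule of `K`-fixed vectors of a representation. -/
def fixedSubmodule (π : Representation ℂ G V) (K : Subgroup G) : Submodule ℂ V where
  carrier := {v : V | ∀ k ∈ K, π k v = v}
  add_mem' := by
    intro a b ha hb k hk
    simp [map_add, ha k hk, hb k hk]
  zero_mem' := by
    intro k hk
    simp
  smul_mem' := by
    intro c v hv k hk
    simp [map_smul, hv k hk]

/-- A representation is smooth if every vector has open stabiliser. -/
def IsSmooth (π : Representation ℂ G V) : Prop :=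
  ∀ v : V, IsOpen {g : G | π g v = v}

/-- A representation is admissible if the fixed vectors of every compact open subgroup form a
finite-dimensional subspace. -/
def IsAdmissible (π : Representation ℂ G V) : Prop :=
  ∀ K : Subgroup G, IsCompact (K : Set G) → IsOpen (K : Set G) →
    FiniteDimensional ℂ (fixedSubmodule π K)

/-!
The operators `π̃ k`, `k ∈ K`, are uniformly bounded: `K` is a compact, hence Baire, group, its
orbit maps on `V` are locally constant by smoothness, so some set `{k | ‖π k‖ ≤ n}` has interior
and finitely many translates of it cover `K`. Given a `K`-fixed `w ∈ Ṽ`, approximate it by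
`v ∈ V`; the orbit `K • v` is finite, and its average is `K`-fixed and within `C ‖v - w‖` of `w`.
Hence `w` lies in the closure of `V^K`, which is finite-dimensional by admissibility, so closed.
-/

open Function Topology

section Averaging

variable {M : Type*} [AddCommMonoid M]

lemma sum_apply_eq_sum_of_mapsTo {s : Finset M} {f : M → M} (hf : Injective f)
    (hs : Set.MapsTo f s s) : ∑ x ∈ s, f x = ∑ x ∈ s, x :=
  Finset.sum_nbij (f := f) (g := fun x => x) f hs hf.injOn
    ((s.finite_toSet.injOn_iff_bijOn_of_mapsTo hs).mp hf.injOn).surjOn fun _ _ => rfl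

variable {𝕜 F ι : Type*} [RCLike 𝕜] [SeminormedAddCommGroup F] [NormedSpace 𝕜 F]

lemma norm_average_sub_le {s : Finset ι} (hs : s.Nonempty) (z : ι → F) (w : F) {r : ℝ}
    (h : ∀ i ∈ s, ‖z i - w‖ ≤ r) : ‖(s.card : 𝕜)⁻¹ • ∑ i ∈ s, z i - w‖ ≤ r := by
  have hcard : (s.card : ℝ) ≠ 0 := by exact_mod_cast hs.card_pos.ne'
  have hw : w = (s.card : 𝕜)⁻¹ • ∑ _i ∈ s, w := by
    rw [Finset.sum_const, ← Nat.cast_smul_eq_nsmul 𝕜, smul_smul,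
      inv_mul_cancel₀ (by exact_mod_cast hcard), one_smul]
  calc ‖(s.card : 𝕜)⁻¹ • ∑ i ∈ s, z i - w‖
      = (s.card : ℝ)⁻¹ * ‖∑ i ∈ s, (z i - w)‖ := by
        conv_lhs => rw [hw, ← smul_sub, ← Finset.sum_sub_distrib]
        rw [norm_smul, norm_inv, RCLike.norm_natCast]
    _ ≤ (s.card : ℝ)⁻¹ * (s.card * r) := by
        refine mul_le_mul_of_nonneg_left ?_ (inv_nonneg.mpr s.card.cast_nonneg)
        exact (norm_sum_le _ _).trans
          ((Finset.sum_le_card_nsmul _ _ _ h).trans_eq (nsmul_eq_mul _ _))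
    _ = r := by field_simp

end Averaging

section UniformBound

variable {𝕜 H E : Type*} [CommSemiring 𝕜] [Group H] [TopologicalSpace H] [IsTopologicalGroup H]
  [CompactSpace H] [BaireSpace H] [SeminormedAddCommGroup E] [Module 𝕜 E]

theorem exists_uniform_bound_of_compactSpace (ρ : Representation 𝕜 H E)
    (hbdd : ∀ h, ∃ c, ∀ v, ‖ρ h v‖ ≤ c * ‖v‖) (hcont : ∀ v, Continuous fun h => ρ h v) :
    ∃ C, 0 ≤ C ∧ ∀ h v, ‖ρ h v‖ ≤ C * ‖v‖ := by
  have hclosed : ∀ n : ℕ, IsClosed {h : H | ∀ v, ‖ρ h v‖ ≤ n * ‖v‖} := fun n => by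
    simp only [Set.ofPred_forall]
    exact isClosed_iInter fun v => isClosed_le (hcont v).norm (by fun_prop)
  have hcover : ∀ h, ∃ n : ℕ, ∀ v, ‖ρ h v‖ ≤ n * ‖v‖ := fun h => by
    obtain ⟨c, hc⟩ := hbdd h
    exact ⟨⌈c⌉₊, fun v => (hc v).trans (by gcongr; exact Nat.le_ceil c)⟩
  choose N hN using hcover
  obtain ⟨n, hn⟩ := nonempty_interior_of_iUnion_of_closed hclosed
    (Set.eq_univ_of_forall fun h => Set.mem_iUnion.mpr ⟨N h, hN h⟩)
  obtain ⟨t, ht⟩ := compact_covered_by_mul_left_translates isCompact_univ hn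
  refine ⟨∑ g ∈ t, (N g⁻¹ : ℝ) * n, by positivity, fun h v => ?_⟩
  obtain ⟨g, hg, hgh⟩ := Set.mem_iUnion₂.mp (ht (Set.mem_univ h))
  calc ‖ρ h v‖ = ‖ρ g⁻¹ (ρ (g * h) v)‖ := by
        rw [← Module.End.mul_apply, ← map_mul, inv_mul_cancel_left]
    _ ≤ N g⁻¹ * (n * ‖v‖) := (hN _ _).trans (by gcongr; exact hgh v)
    _ ≤ (∑ g ∈ t, (N g⁻¹ : ℝ) * n) * ‖v‖ := by
        rw [← mul_assoc]
        gcongr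
        exact Finset.single_le_sum (f := fun g => (N g⁻¹ : ℝ) * n) (fun _ _ => by positivity) hg

end UniformBound

section Completion

variable {𝕜 E : Type*} [NontriviallyNormedField 𝕜] [NormedAddCommGroup E] [NormedSpace 𝕜 E]

lemma norm_le_opNorm_mul_of_extends (T : Completion E →L[𝕜] Completion E) {f : E → E}
    (hT : ∀ v : E, T v = (f v : Completion E)) (v : E) : ‖f v‖ ≤ ‖T‖ * ‖v‖ := by
  have h := T.le_opNorm (v : Completion E)
  rwa [hT, Completion.norm_coe, Completion.norm_coe] at h

lemma norm_apply_le_of_extends {T : Completion E → Completion E} (hT : Continuous T)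
    {f : E → E} (hTf : ∀ v : E, T v = (f v : Completion E)) {C : ℝ}
    (hf : ∀ v, ‖f v‖ ≤ C * ‖v‖) (w : Completion E) : ‖T w‖ ≤ C * ‖w‖ := by
  refine Completion.induction_on w (isClosed_le (by fun_prop) (by fun_prop)) fun v => ?_
  simpa only [hTf, Completion.norm_coe] using hf v

lemma isClosed_image_coe_of_finiteDimensional [CompleteSpace 𝕜] (S : Submodule 𝕜 E)
    [FiniteDimensional 𝕜 S] :
    IsClosed (((↑) : E → Completion E) '' S) := by
  simpa [Submodule.map_coe] using
    (S.map (Completion.toComplL : E →L[𝕜] Completion E).toLinearMap).closed_of_finiteDimensional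

end Completion

section SmoothRepresentation

variable {H : Type} [Group H] [TopologicalSpace H] [IsTopologicalGroup H]
  {E : Type} [NormedAddCommGroup E] [NormedSpace ℂ E] {π : Representation ℂ H E}

lemma IsSmooth.isLocallyConstant_apply (hπ : IsSmooth π) (v : E) :
    IsLocallyConstant fun g => π g v := by
  refine (IsLocallyConstant.iff_eventually_eq _).2 fun g => ?_
  have hstab : ∀ᶠ h in 𝓝 g, g⁻¹ * h ∈ {g' : H | π g' v = v} :=
    (continuous_const.mul continuous_id).continuousAt.preimage_mem_nhds
      ((hπ v).mem_nhds (by simp))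
  filter_upwards [hstab] with h hh
  rw [← mul_inv_cancel_left g h, map_mul, Module.End.mul_apply, hh]

lemma IsSmooth.finite_range_apply (hπ : IsSmooth π) (K : Subgroup H) [CompactSpace K] (v : E) :
    (Set.range fun k : K => π k v).Finite :=
  ((hπ.isLocallyConstant_apply v).comp_continuous continuous_subtype_val).range_finite

lemma exists_uniform_bound_of_extends [T2Space H] (hπ : IsSmooth π)
    {πt : H → (Completion E →L[ℂ] Completion E)}
    (hcompat : ∀ (g : H) (v : E), πt g (↑v : Completion E) = (↑(π g v) : Completion E))
    (K : Subgroup H) [CompactSpace K] :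
    ∃ C, 0 ≤ C ∧ ∀ k ∈ K, ∀ w : Completion E, ‖πt k w‖ ≤ C * ‖w‖ := by
  obtain ⟨C, hC0, hC⟩ := exists_uniform_bound_of_compactSpace (π.comp K.subtype)
    (fun k => ⟨_, norm_le_opNorm_mul_of_extends (πt k) (hcompat k)⟩)
    (fun v => (hπ.isLocallyConstant_apply v).continuous.comp continuous_subtype_val)
  exact ⟨C, hC0, fun k hk =>
    norm_apply_le_of_extends (πt k).continuous (hcompat k) (hC ⟨k, hk⟩)⟩

lemma exists_mem_fixedSubmodule_norm_sub_le (hπ : IsSmooth π)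
    {πt : H → (Completion E →L[ℂ] Completion E)}
    (hcompat : ∀ (g : H) (v : E), πt g (↑v : Completion E) = (↑(π g v) : Completion E))
    {K : Subgroup H} [CompactSpace K] {C : ℝ}
    (hC : ∀ k ∈ K, ∀ w : Completion E, ‖πt k w‖ ≤ C * ‖w‖)
    {w : Completion E} (hw : ∀ k ∈ K, πt k w = w) (v : E) :
    ∃ u ∈ fixedSubmodule π K, ‖(u : Completion E) - w‖ ≤ C * ‖(v : Completion E) - w‖ := by
  set O := (hπ.finite_range_apply K v).toFinset
  have hO : O.Nonempty := ⟨v, by simpa [O] using ⟨1, K.one_mem, by simp⟩⟩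
  refine ⟨(O.card : ℂ)⁻¹ • ∑ x ∈ O, x, fun k hk => ?_, ?_⟩
  · have hmaps : Set.MapsTo (π k) O O := by
      rintro _ hx
      obtain ⟨k', rfl⟩ := (hπ.finite_range_apply K v).mem_toFinset.mp hx
      exact (hπ.finite_range_apply K v).mem_toFinset.mpr
        ⟨⟨k, hk⟩ * k', by simp [map_mul, Module.End.mul_apply]⟩
    rw [map_smul, map_sum, sum_apply_eq_sum_of_mapsTo
      (LeftInverse.injective (π.inv_self_apply k)) hmaps]
  · have hcoe : ((((O.card : ℂ)⁻¹ • ∑ x ∈ O, x : E)) : Completion E)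
        = (O.card : ℂ)⁻¹ • ∑ x ∈ O, (x : Completion E) := by
      simp only [← Completion.coe_toComplL (𝕜 := ℂ), map_smul, map_sum]
    rw [hcoe]
    refine norm_average_sub_le hO _ w fun x hx => ?_
    obtain ⟨k, rfl⟩ := (hπ.finite_range_apply K v).mem_toFinset.mp hx
    calc ‖((π k v : E) : Completion E) - w‖ = ‖πt k ((v : Completion E) - w)‖ := by
          rw [map_sub, hcompat, hw k k.2]
      _ ≤ C * ‖(v : Completion E) - w‖ := hC k k.2 _

lemma mem_closure_image_fixedSubmodule (hπ : IsSmooth π)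
    {πt : H → (Completion E →L[ℂ] Completion E)}
    (hcompat : ∀ (g : H) (v : E), πt g (↑v : Completion E) = (↑(π g v) : Completion E))
    {K : Subgroup H} [CompactSpace K] {C : ℝ} (hC0 : 0 ≤ C)
    (hC : ∀ k ∈ K, ∀ w : Completion E, ‖πt k w‖ ≤ C * ‖w‖)
    {w : Completion E} (hw : ∀ k ∈ K, πt k w = w) :
    w ∈ closure (((↑) : E → Completion E) '' fixedSubmodule π K) := by
  refine Metric.mem_closure_iff.2 fun ε hε => ?_
  obtain ⟨v, hv⟩ :=
    Metric.denseRange_iff.mp Completion.denseRange_coe w (ε / (C + 1)) (by positivity)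
  obtain ⟨u, hu, huw⟩ := exists_mem_fixedSubmodule_norm_sub_le hπ hcompat hC hw v
  refine ⟨u, ⟨u, hu, rfl⟩, ?_⟩
  calc dist w u = ‖(u : Completion E) - w‖ := by rw [dist_comm, dist_eq_norm]
    _ ≤ C * ‖(v : Completion E) - w‖ := huw
    _ ≤ C * (ε / (C + 1)) := by
        rw [← dist_eq_norm, dist_comm]
        exact mul_le_mul_of_nonneg_left hv.le hC0
    _ < ε := by
        rw [mul_div_assoc', div_lt_iff₀ (by positivity)]
        linarith

end SmoothRepresentation

theorem completion_fixed_vectors_general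
    (π : Representation ℂ G V)
    (hsmooth : IsSmooth π) (hadm : IsAdmissible π)
    (πt : G → (Completion V →L[ℂ] Completion V))
    (hcompat : ∀ (g : G) (v : V), πt g (↑v : Completion V) = (↑(π g v) : Completion V))
    (K : Subgroup G) (hKcompact : IsCompact (K : Set G)) (hKopen : IsOpen (K : Set G)) :
    {w : Completion V | ∀ k ∈ K, πt k w = w}
      = (fun v : V => (↑v : Completion V)) '' {v : V | ∀ k ∈ K, π k v = v} := by
  have : CompactSpace K := isCompact_iff_compactSpace.mp hKcompact
  have : FiniteDimensional ℂ (fixedSubmodule π K) := hadm K hKcompact hKopen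
  obtain ⟨C, hC0, hC⟩ := exists_uniform_bound_of_extends hsmooth hcompat K
  ext w
  refine ⟨fun hw => ?_, ?_⟩
  · exact (isClosed_image_coe_of_finiteDimensional (fixedSubmodule π K)).closure_subset
      (mem_closure_image_fixedSubmodule hsmooth hcompat hC0 hC hw)
  · rintro ⟨v, hv, rfl⟩ k hk
    exact (hcompat k v).trans (congrArg _ (hv k hk))

/-- **Proposition.** Let `G` be a tdlc group and `(π, V)` a smooth admissible representation of
`G`, continuous with respect to a norm on `V`, and let `(π̃, Ṽ)` be the extension of `π` to the
completion `Ṽ` of `V`. Then for every compact open subgroup `K ≤ G` one has `Ṽ^K = V^K`. -/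
theorem completion_fixed_vectors
    (π : Representation ℂ G V)
    (hsmooth : IsSmooth π) (hadm : IsAdmissible π)
    (hcont : ∀ v : V, Continuous fun g : G => π g v)
    (πt : G → (Completion V →L[ℂ] Completion V))
    (hcompat : ∀ (g : G) (v : V), πt g (↑v : Completion V) = (↑(π g v) : Completion V))
    (K : Subgroup G) (hKcompact : IsCompact (K : Set G)) (hKopen : IsOpen (K : Set G)) :
    {w : Completion V | ∀ k ∈ K, πt k w = w}
      = (fun v : V => (↑v : Completion V)) '' {v : V | ∀ k ∈ K, π k v = v} :=
  completion_fixed_vectors_general π hsmooth hadm πt hcompat K hKcompact hKopen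

end SmoothRep
end
end

section
/- Let $G$ be a totally disconnected locally compact group and $(\pi, V)$ a smooth admissible representation of $G$ over $\mathbb{C}$. Let $\|\cdot\|$ be a norm on $V$ with respect to which $\pi$ is continuous, and let $(\widetilde\pi, \widetilde V)$ denote the extension of $\pi$ to the completion of $V$ with respect to this norm. Then the subspace of smooth vectors of $\widetilde V$ equals $V$, that is, $\widetilde{V}^\infty = \bigcup_K \widetilde{V}^K = V$ where the union runs over all compact open subgroups $K$ of $G$. -/
/-!
A smooth vector `w` of the completion is fixed by some compact open `K`. Since `G` is Baire and
the extended operators are strongly continuous on the dense subspace `V`, they are uniformly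
bounded, say by `C`, on a compact open `K₁ ≤ K`. Averaging the (finite) `K₁`-orbit of an
approximation `v ∈ V` of `w` gives `u ∈ V^{K₁}` with `‖u - w‖ ≤ C ‖v - w‖`, so `w` lies in the
closure of the image of `V^{K₁}`, which is finite-dimensional by admissibility and hence closed.
-/

open UniformSpace

noncomputable section

open Set Filter Topology
open scoped Pointwise

theorem exists_isCompact_isClopen_subset {X : Type*} [TopologicalSpace X] [LocallyCompactSpace X]
    [T2Space X] [TotallyDisconnectedSpace X] {x : X} {U : Set X} (hU : U ∈ 𝓝 x) :
    ∃ W, IsCompact W ∧ IsClopen W ∧ x ∈ W ∧ W ⊆ U := by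
  obtain ⟨s, hs, hsx⟩ := exists_compact_mem_nhds x
  obtain ⟨W, hW, hxW, hWs⟩ :=
    loc_compact_Haus_tot_disc_of_zero_dim.mem_nhds_iff.mp (inter_mem hsx hU)
  exact ⟨W, hs.of_isClosed_subset hW.1 (hWs.trans inter_subset_left),
    hW, hxW, hWs.trans inter_subset_right⟩

theorem isOpen_stabilizer_of_isCompact_of_isOpen {G : Type*} [Group G] [TopologicalSpace G]
    [IsTopologicalGroup G] {W : Set G} (hWc : IsCompact W) (hWo : IsOpen W) :
    IsOpen (MulAction.stabilizer G W : Set G) := by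
  obtain ⟨T, hT, hTW⟩ := compact_open_separated_mul_left hWc hWo subset_rfl
  refine Subgroup.isOpen_of_mem_nhds _ (g := 1) <|
    mem_of_superset (inter_mem hT (inv_mem_nhds_one G hT)) ?_
  rintro g ⟨hg, hg'⟩
  have hgW : g • W ⊆ W := fun _ ⟨y, hy, hgy⟩ => hTW (hgy ▸ Set.mul_mem_mul hg hy)
  have hgW' : g⁻¹ • W ⊆ W := fun _ ⟨y, hy, hgy⟩ => hTW (hgy ▸ Set.mul_mem_mul hg' hy)
  exact MulAction.mem_stabilizer_iff.2 (hgW.antisymm (Set.subset_smul_set_iff.2 hgW'))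

/-- van Dantzig's theorem. -/
theorem exists_isCompact_isOpen_subgroup_subset {G : Type*} [Group G] [TopologicalSpace G]
    [IsTopologicalGroup G] [LocallyCompactSpace G] [TotallyDisconnectedSpace G] {U : Set G}
    (hU : U ∈ 𝓝 1) :
    ∃ K : Subgroup G, IsCompact (K : Set G) ∧ IsOpen (K : Set G) ∧ (K : Set G) ⊆ U := by
  obtain ⟨W, hWc, hW, h1W, hWU⟩ := exists_isCompact_isClopen_subset hU
  have hKW : (MulAction.stabilizer G W : Set G) ⊆ W := fun g hg => by
    simpa using (MulAction.mem_stabilizer_iff.1 hg).subset (Set.smul_mem_smul_set h1W)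
  have hKo := isOpen_stabilizer_of_isCompact_of_isOpen hWc hW.2
  exact ⟨_, hWc.of_isClosed_subset (Subgroup.isClosed_of_isOpen _ hKo) hKW, hKo, hKW.trans hWU⟩

theorem ContinuousLinearMap.opNorm_le_of_dense {𝕜 E F : Type*} [NontriviallyNormedField 𝕜]
    [SeminormedAddCommGroup E] [SeminormedAddCommGroup F] [NormedSpace 𝕜 E] [NormedSpace 𝕜 F]
    {D : Set E} (hD : Dense D) (f : E →L[𝕜] F) {C : ℝ} (hC : 0 ≤ C)
    (h : ∀ x ∈ D, ‖f x‖ ≤ C * ‖x‖) : ‖f‖ ≤ C :=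
  f.opNorm_le_bound hC <| hD.induction h <|
    isClosed_le f.continuous.norm (continuous_const.mul continuous_norm)

theorem isClosed_setOf_opNorm_le {X 𝕜 E F : Type*} [TopologicalSpace X] [NontriviallyNormedField 𝕜]
    [SeminormedAddCommGroup E] [SeminormedAddCommGroup F] [NormedSpace 𝕜 E] [NormedSpace 𝕜 F]
    {D : Set E} (hD : Dense D) {T : X → E →L[𝕜] F} (hT : ∀ x ∈ D, Continuous fun a => T a x)
    {C : ℝ} (hC : 0 ≤ C) : IsClosed {a | ‖T a‖ ≤ C} := by
  have : {a | ‖T a‖ ≤ C} = ⋂ x ∈ D, {a | ‖T a x‖ ≤ C * ‖x‖} := by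
    ext a
    simp only [mem_iInter]
    exact ⟨fun ha x _ => (T a).le_of_opNorm_le ha x, (T a).opNorm_le_of_dense hD hC⟩
  rw [this]
  exact isClosed_biInter fun x hx => isClosed_le (hT x hx).norm continuous_const

theorem exists_eventually_nhds_one_opNorm_le {G 𝕜 E : Type*} [Group G] [TopologicalSpace G]
    [IsTopologicalGroup G] [BaireSpace G] [NontriviallyNormedField 𝕜]
    [SeminormedAddCommGroup E] [NormedSpace 𝕜 E] {D : Set E} (hD : Dense D)
    {T : G → E →L[𝕜] E} (hT : ∀ x ∈ D, Continuous fun g => T g x)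
    (hmul : ∀ g h, (T g).comp (T h) = T (g * h)) :
    ∃ C, ∀ᶠ g in 𝓝 1, ‖T g‖ ≤ C := by
  obtain ⟨N, g₀, hg₀⟩ := nonempty_interior_of_iUnion_of_closed
    (fun N : ℕ => isClosed_setOf_opNorm_le hD hT N.cast_nonneg)
    (iUnion_eq_univ_iff.2 fun g => exists_nat_ge ‖T g‖)
  have hnear : ∀ᶠ g in 𝓝 1, g₀ * g ∈ interior {a | ‖T a‖ ≤ N} :=
    (continuous_const_mul g₀).tendsto' 1 g₀ (mul_one g₀) (isOpen_interior.mem_nhds hg₀)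
  refine ⟨‖T g₀⁻¹‖ * N, hnear.mono fun g hg => ?_⟩
  calc ‖T g‖ = ‖(T g₀⁻¹).comp (T (g₀ * g))‖ := by rw [hmul, inv_mul_cancel_left]
    _ ≤ ‖T g₀⁻¹‖ * ‖T (g₀ * g)‖ := (T g₀⁻¹).opNorm_comp_le _
    _ ≤ ‖T g₀⁻¹‖ * N := by gcongr; exact interior_subset (s := {a | ‖T a‖ ≤ N}) hg

theorem mem_closure_of_forall_dist_le {X : Type*} [PseudoMetricSpace X] {D S : Set X} {w : X}
    (hD : w ∈ closure D) (C : ℝ) (h : ∀ x ∈ D, ∃ y ∈ S, dist y w ≤ C * dist x w) :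
    w ∈ closure S := by
  refine Metric.mem_closure_iff.2 fun ε hε => ?_
  obtain ⟨x, hxD, hx⟩ := Metric.mem_closure_iff.1 hD (ε / (|C| + 1)) (by positivity)
  obtain ⟨y, hyS, hy⟩ := h x hxD
  refine ⟨y, hyS, ?_⟩
  calc dist w y ≤ C * dist x w := dist_comm w y ▸ hy
    _ ≤ (|C| + 1) * dist x w := by gcongr; linarith [le_abs_self C]
    _ < ε := by rw [dist_comm]; exact (lt_div_iff₀' (by positivity)).1 hx

theorem norm_inv_card_smul_sum_le {ι 𝕜 E : Type*} [RCLike 𝕜] [SeminormedAddCommGroup E]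
    [NormedSpace 𝕜 E] {s : Finset ι} (hs : s.Nonempty) {f : ι → E} {B : ℝ}
    (h : ∀ i ∈ s, ‖f i‖ ≤ B) : ‖(s.card : 𝕜)⁻¹ • ∑ i ∈ s, f i‖ ≤ B := by
  have hcard : (0 : ℝ) < s.card := by exact_mod_cast hs.card_pos
  rw [norm_smul, norm_inv, RCLike.norm_natCast, inv_mul_le_iff₀ hcard]
  calc ‖∑ i ∈ s, f i‖ ≤ ∑ i ∈ s, ‖f i‖ := norm_sum_le _ _
    _ ≤ s.card * B := by simpa using Finset.sum_le_sum h

theorem norm_inv_card_smul_sum_sub_le {ι 𝕜 E : Type*} [RCLike 𝕜] [SeminormedAddCommGroup E]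
    [NormedSpace 𝕜 E] {s : Finset ι} (hs : s.Nonempty) {f : ι → E} {y w : E} {C : ℝ}
    (h : ∀ i ∈ s, ∃ A : E →L[𝕜] E, ‖A‖ ≤ C ∧ A w = w ∧ A y = f i) :
    ‖(s.card : 𝕜)⁻¹ • ∑ i ∈ s, f i - w‖ ≤ C * ‖y - w‖ := by
  have hcard : (s.card : 𝕜) ≠ 0 := by exact_mod_cast hs.card_pos.ne'
  have hsub : (s.card : 𝕜)⁻¹ • ∑ i ∈ s, f i - w = (s.card : 𝕜)⁻¹ • ∑ i ∈ s, (f i - w) := by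
    rw [Finset.sum_sub_distrib, smul_sub, Finset.sum_const, ← Nat.cast_smul_eq_nsmul 𝕜,
      inv_smul_smul₀ hcard]
  rw [hsub]
  refine norm_inv_card_smul_sum_le hs fun i hi => ?_
  obtain ⟨A, hAC, hAw, hAy⟩ := h i hi
  calc ‖f i - w‖ = ‖A (y - w)‖ := by rw [map_sub, hAw, hAy]
    _ ≤ C * ‖y - w‖ := A.le_of_opNorm_le hAC _

namespace SmoothRep

section Orbit

variable {𝕜 G V : Type*} [CommSemiring 𝕜] [Group G] [TopologicalSpace G] [IsTopologicalGroup G]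
  [AddCommMonoid V] [Module 𝕜 V] {π : Representation 𝕜 G V} {v : V}

theorem isLocallyConstant_apply_of_isOpen (hv : IsOpen {g | π g v = v}) :
    IsLocallyConstant fun g => π g v := by
  refine (IsLocallyConstant.iff_eventually_eq _).2 fun g => ?_
  rw [← map_mul_left_nhds_one g, eventually_map]
  filter_upwards [hv.mem_nhds (by simp)] with h hh
  rw [map_mul, Module.End.mul_apply, hh]

theorem finite_image_apply_of_isOpen (hv : IsOpen {g | π g v = v}) {K : Set G} (hK : IsCompact K) :
    ((fun g => π g v) '' K).Finite := by
  have := isCompact_iff_compactSpace.1 hK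
  rw [image_eq_range]
  exact ((isLocallyConstant_apply_of_isOpen hv).comp_continuous continuous_subtype_val).range_finite

theorem exists_finset_orbit_sum_fixed (hv : IsOpen {g | π g v = v}) {K : Subgroup G}
    (hK : IsCompact (K : Set G)) :
    ∃ s : Finset V, s.Nonempty ∧ (∀ x ∈ s, ∃ k ∈ K, π k v = x) ∧
      ∀ k ∈ K, π k (∑ x ∈ s, x) = ∑ x ∈ s, x := by
  set s := (finite_image_apply_of_isOpen hv hK).toFinset
  have hmem : ∀ {x}, x ∈ s ↔ ∃ k ∈ K, π k v = x := by simp [s]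
  have hstable : ∀ k ∈ K, ∀ x ∈ s, π k x ∈ s := by
    intro k hk x hx
    obtain ⟨g, hg, rfl⟩ := hmem.1 hx
    exact hmem.2 ⟨k * g, K.mul_mem hk hg, by rw [map_mul, Module.End.mul_apply]⟩
  refine ⟨s, ⟨v, hmem.2 ⟨1, K.one_mem, by simp⟩⟩, fun x hx => hmem.1 hx, fun k hk => ?_⟩
  rw [map_sum]
  exact Finset.sum_nbij' (π k) (π k⁻¹) (hstable k hk) (hstable _ (K.inv_mem hk))
    (fun x _ => by simp [← Module.End.mul_apply, ← map_mul])
    (fun x _ => by simp [← Module.End.mul_apply, ← map_mul]) fun _ _ => rfl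

end Orbit

section Extension

variable {𝕜 G V : Type*} [NontriviallyNormedField 𝕜] [Monoid G] [NormedAddCommGroup V]
  [NormedSpace 𝕜 V]

theorem comp_eq_mul_of_extends (π : Representation 𝕜 G V)
    {πt : G → (Completion V →L[𝕜] Completion V)}
    (hcompat : ∀ (g : G) (v : V), πt g (↑v : Completion V) = (↑(π g v) : Completion V))
    (g h : G) : (πt g).comp (πt h) = πt (g * h) :=
  DFunLike.coe_injective <| Completion.ext (πt g ∘L πt h).continuous
    (πt (g * h)).continuous fun v => by simp [hcompat, map_mul]

end Extension

variable {G : Type} [Group G] [TopologicalSpace G] [IsTopologicalGroup G]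
  [LocallyCompactSpace G] [TotallyDisconnectedSpace G]
  {V : Type} [NormedAddCommGroup V] [NormedSpace ℂ V]

theorem mem_range_coe_of_forall_fixed (π : Representation ℂ G V) (hsmooth : IsSmooth π)
    (hadm : IsAdmissible π) (hcont : ∀ v : V, Continuous fun g : G => π g v)
    {πt : G → (Completion V →L[ℂ] Completion V)}
    (hcompat : ∀ (g : G) (v : V), πt g (↑v : Completion V) = (↑(π g v) : Completion V))
    {K : Subgroup G} (hKo : IsOpen (K : Set G)) {w : Completion V} (hw : ∀ k ∈ K, πt k w = w) :
    w ∈ range ((↑) : V → Completion V) := by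
  have hstrong : ∀ x ∈ range ((↑) : V → Completion V), Continuous fun g => πt g x := by
    rintro _ ⟨v, rfl⟩
    simp only [hcompat]
    exact (Completion.continuous_coe V).comp (hcont v)
  obtain ⟨C, hC⟩ := exists_eventually_nhds_one_opNorm_le (Completion.denseRange_coe (α := V))
    hstrong (comp_eq_mul_of_extends π hcompat)
  obtain ⟨K₁, hK₁c, hK₁o, hK₁⟩ :=
    exists_isCompact_isOpen_subgroup_subset (inter_mem hC (hKo.mem_nhds K.one_mem))
  have := hadm K₁ hK₁c hK₁o
  set W := (fixedSubmodule π K₁).map (Completion.toComplL : V →L[ℂ] Completion V).toLinearMap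
  have hwW : w ∈ closure (W : Set (Completion V)) := by
    refine mem_closure_of_forall_dist_le (Completion.denseRange_coe w) C ?_
    rintro _ ⟨v, rfl⟩
    obtain ⟨s, hs, hsv, hsfix⟩ := exists_finset_orbit_sum_fixed (hsmooth v) hK₁c
    refine ⟨_, ⟨(s.card : ℂ)⁻¹ • ∑ x ∈ s, x, Submodule.smul_mem _ _ hsfix, rfl⟩, ?_⟩
    rw [dist_eq_norm, dist_eq_norm, ContinuousLinearMap.coe_coe, map_smul, map_sum]
    refine norm_inv_card_smul_sum_sub_le hs fun x hx => ?_
    obtain ⟨k, hk, rfl⟩ := hsv x hx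
    exact ⟨πt k, (hK₁ hk).1, hw k (hK₁ hk).2, by simp [hcompat]⟩
  obtain ⟨u, -, rfl⟩ := W.closed_of_finiteDimensional.closure_eq ▸ hwW
  exact ⟨u, rfl⟩

/-- **Proposition.** Let `G` be a tdlc group and `(π, V)` a smooth admissible representation of
`G`, continuous with respect to a norm on `V`, and let `(π̃, Ṽ)` be the extension of `π` to the
completion `Ṽ` of `V`. Then the space `Ṽ^∞ = ⋃_K Ṽ^K` of smooth vectors of `Ṽ` (the union
running over all compact open subgroups `K ≤ G`) is exactly (the image of) `V`. -/
theorem completion_smooth_vectors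
    (π : Representation ℂ G V)
    (hsmooth : IsSmooth π) (hadm : IsAdmissible π)
    (hcont : ∀ v : V, Continuous fun g : G => π g v)
    (πt : G → (Completion V →L[ℂ] Completion V))
    (hcompat : ∀ (g : G) (v : V), πt g (↑v : Completion V) = (↑(π g v) : Completion V)) :
    {w : Completion V | ∃ K : Subgroup G, IsCompact (K : Set G) ∧ IsOpen (K : Set G) ∧
        ∀ k ∈ K, πt k w = w}
      = Set.range (fun v : V => (↑v : Completion V)) := by
  ext w
  refine ⟨fun ⟨K, _, hKo, hw⟩ =>
    mem_range_coe_of_forall_fixed π hsmooth hadm hcont hcompat hKo hw, ?_⟩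
  rintro ⟨v, rfl⟩
  obtain ⟨K, hKc, hKo, hKv⟩ :=
    exists_isCompact_isOpen_subgroup_subset ((hsmooth v).mem_nhds (by simp))
  exact ⟨K, hKc, hKo, fun k hk => by rw [hcompat, hKv hk]⟩

end SmoothRep
end
end
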